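/- Let ρ be a separable state on ℋ_A ⊗ ℋ_B and let ρ_A = tr_B ρ. Then ‖ρ − ρ_A ⊗ 𝕀_B/d‖₁ ≤ 2(d−1)/d. -/

import Mathlib

open Matrix MeasureTheory
open scoped Kronecker BigOperators ENNReal ComplexOrder

noncomputable section

namespace SepPaper

/-- The rank-one operator `|ψ⟩⟨ψ|`. -/
def proj {n : Type*} (ψ : n → ℂ) : Matrix n n ℂ := Matrix.vecMulVec ψ (star ψ)

/-- `Λ` is a separable operator on `ℂ^{dA} ⊗ ℂ^{d}`: a finite conical combination of
pure product operators `|ψ⟩⟨ψ| ⊗ |φ⟩⟨φ|`. -/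
def IsSeparable (dA d : ℕ) (Λ : Matrix (Fin dA × Fin d) (Fin dA × Fin d) ℂ) : Prop :=
  ∃ (k : ℕ) (c : Fin k → ℝ) (ψ : Fin k → (Fin dA → ℂ)) (φ : Fin k → (Fin d → ℂ)),
    (∀ i, 0 ≤ c i) ∧
    Λ = ∑ i, (c i : ℂ) • (proj (ψ i) ⊗ₖ proj (φ i))

/-- Partial trace over the `B` system. -/
def trB {dA d : ℕ} (M : Matrix (Fin dA × Fin d) (Fin dA × Fin d) ℂ) :
    Matrix (Fin dA) (Fin dA) ℂ :=
  fun a a' => ∑ b : Fin d, M (a, b) (a', b)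

/-- Index type of `ℋ_A ⊗ ℋ_B ⊗ ℋ_B^{⊗(N-1)} = ℋ_A ⊗ ℋ_B^{⊗N}` (for `N ≥ 1`). -/
abbrev ExtIdx (dA d N : ℕ) := Fin dA × Fin d × (Fin (N - 1) → Fin d)

/-- The orthogonal projector onto the symmetric subspace of `(ℂ^d)^{⊗N}`,
realized as the average of all permutation operators. -/
def symProj (d N : ℕ) : Matrix (Fin N → Fin d) (Fin N → Fin d) ℂ :=
  (N.factorial : ℂ)⁻¹ •
    ∑ π : Equiv.Perm (Fin N), Matrix.of (fun f g => if (fun i => g (π i)) = f then (1 : ℂ) else 0)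

/-- Identification of `ℂ^d ⊗ (ℂ^d)^{⊗(N-1)}` with `(ℂ^d)^{⊗((N-1)+1)}`. -/
def bEquiv (d N : ℕ) : (Fin d × (Fin (N - 1) → Fin d)) ≃ (Fin (N - 1 + 1) → Fin d) :=
  Fin.consEquiv (fun _ => Fin d)

/-- The symmetric projector on the `N = (N-1)+1` copies of `ℂ^d`,
viewed on the index type `Fin d × (Fin (N-1) → Fin d)`. -/
def symProjB (d N : ℕ) : Matrix (Fin d × (Fin (N - 1) → Fin d)) (Fin d × (Fin (N - 1) → Fin d)) ℂ :=
  Matrix.reindex (bEquiv d N).symm (bEquiv d N).symm (symProj d (N - 1 + 1))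

/-- Partial trace over the last `N-1` copies of `ℋ_B`. -/
def ptraceExt {dA d N : ℕ} (M : Matrix (ExtIdx dA d N) (ExtIdx dA d N) ℂ) :
    Matrix (Fin dA × Fin d) (Fin dA × Fin d) ℂ :=
  fun p q => ∑ g : Fin (N - 1) → Fin d, M (p.1, p.2, g) (q.1, q.2, g)

/-- Membership in `𝒮^N`: existence of a positive semidefinite Bose-symmetric
`N`-extension. -/
def MemSN (dA d N : ℕ) (Λ : Matrix (Fin dA × Fin d) (Fin dA × Fin d) ℂ) : Prop :=
  ∃ Λext : Matrix (ExtIdx dA d N) (ExtIdx dA d N) ℂ,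
    Λext.PosSemidef ∧ ptraceExt Λext = Λ ∧
    Λext * ((1 : Matrix (Fin dA) (Fin dA) ℂ) ⊗ₖ symProjB d N) = Λext

/-- Partial transpose of an operator on `ℋ_A ⊗ ℋ_B^{⊗N}` w.r.t. the bipartition
`(A and the first ⌈N/2⌉ copies of B) | (the last ⌊N/2⌋ copies of B)`.
Copy `0` of `B` is the explicit factor and the extra copy `i : Fin (N-1)` is copy
`i+1`; copy `j` is transposed iff `⌈N/2⌉ = (N+1)/2 ≤ j`. -/
def pt {dA d N : ℕ} (M : Matrix (ExtIdx dA d N) (ExtIdx dA d N) ℂ) :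
    Matrix (ExtIdx dA d N) (ExtIdx dA d N) ℂ :=
  fun p q =>
    M (p.1, p.2.1, fun i => if (N + 1) / 2 ≤ (i : ℕ) + 1 then q.2.2 i else p.2.2 i)
      (q.1, q.2.1, fun i => if (N + 1) / 2 ≤ (i : ℕ) + 1 then p.2.2 i else q.2.2 i)

/-- Membership in `𝒮_p^N`: existence of a positive semidefinite Bose-symmetric
`N`-extension which is moreover PPT w.r.t. the bipartition
`A B^{⌈N/2⌉} | B^{⌊N/2⌋}`. -/
def MemSNp (dA d N : ℕ) (Λ : Matrix (Fin dA × Fin d) (Fin dA × Fin d) ℂ) : Prop :=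
  ∃ Λext : Matrix (ExtIdx dA d N) (ExtIdx dA d N) ℂ,
    Λext.PosSemidef ∧ ptraceExt Λext = Λ ∧
    Λext * ((1 : Matrix (Fin dA) (Fin dA) ℂ) ⊗ₖ symProjB d N) = Λext ∧
    (pt Λext).PosSemidef

/-- Membership in `𝒮̃^N = {(N/(N+d)) σ + (1/(N+d)) σ_A ⊗ 𝕀_B : σ ∈ 𝒮^N}`. -/
def MemStildeN (dA d N : ℕ) (Λ : Matrix (Fin dA × Fin d) (Fin dA × Fin d) ℂ) : Prop :=
  ∃ σ, MemSN dA d N σ ∧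
    Λ = ((N : ℂ) / ((N : ℂ) + d)) • σ +
        (1 / ((N : ℂ) + d)) • (trB σ ⊗ₖ (1 : Matrix (Fin d) (Fin d) ℂ))

/-- The Jacobi polynomial `P_n^{(α,β)}` (for natural parameters `α, β`). -/
def jacobiP (n α β : ℕ) (x : ℝ) : ℝ :=
  ∑ s ∈ Finset.range (n + 1),
    (Nat.choose (n + α) (n - s) : ℝ) * (Nat.choose (n + β) s : ℝ) *
      ((x - 1) / 2) ^ s * ((x + 1) / 2) ^ (n - s)

/-- `ε_N = (d/(2(d-1))) · min {1 - x : P_{⌊N/2⌋+1}^{(d-2, N mod 2)}(x) = 0}`. -/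
def epsN (d N : ℕ) : ℝ :=
  ((d : ℝ) / (2 * ((d : ℝ) - 1))) *
    sInf {y : ℝ | ∃ x : ℝ, y = 1 - x ∧ jacobiP (N / 2 + 1) (d - 2) (N % 2) x = 0}

/-- Membership in `𝒮̃_p^N = {(1-ε_N) σ + ε_N σ_A ⊗ 𝕀_B/d : σ ∈ 𝒮_p^N}`. -/
def MemStildeNp (dA d N : ℕ) (Λ : Matrix (Fin dA × Fin d) (Fin dA × Fin d) ℂ) : Prop :=
  ∃ σ, MemSNp dA d N σ ∧
    Λ = ((1 : ℂ) - (epsN d N : ℂ)) • σ +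
        ((epsN d N : ℂ) / d) • (trB σ ⊗ₖ (1 : Matrix (Fin d) (Fin d) ℂ))

/-- The trace norm `‖Z‖₁ = tr √(Z Zᴴ)`. -/
def traceNorm {n : Type*} [Fintype n] [DecidableEq n] (Z : Matrix n n ℂ) : ℝ :=
  (((Matrix.posSemidef_self_mul_conjTranspose Z).1.eigenvectorUnitary.1 *
      diagonal (fun i => (((Matrix.posSemidef_self_mul_conjTranspose Z).1.eigenvalues i).sqrt : ℂ)) *
      (star (Matrix.posSemidef_self_mul_conjTranspose Z).1.eigenvectorUnitary : Matrix n n ℂ)).trace).re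

/-- The operator norm `‖Z‖_∞` (largest singular value), as the norm of the induced
operator on Euclidean space. -/
def opNorm {n : Type*} [Fintype n] [DecidableEq n] (Z : Matrix n n ℂ) : ℝ :=
  ‖LinearMap.toContinuousLinearMap (Matrix.toEuclideanLin Z)‖

/-- `(|φ⟩⟨φ|)^{⊗N}` on `ℋ_B^{⊗N} = ℋ_B ⊗ ℋ_B^{⊗(N-1)}`. -/
def projPowExt {d : ℕ} (N : ℕ) (φ : Fin d → ℂ) :
    Matrix (Fin d × (Fin (N - 1) → Fin d)) (Fin d × (Fin (N - 1) → Fin d)) ℂ :=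
  fun p q => proj φ p.1 q.1 * ∏ i, proj φ (p.2 i) (q.2 i)

/-- The optimal fidelity `F = sup {tr(ρ Λ) : Λ ∈ 𝒮, tr_B Λ = 𝕀_A}`. -/
def fid (dA d : ℕ) (ρ : Matrix (Fin dA × Fin d) (Fin dA × Fin d) ℂ) : ℝ :=
  sSup {r : ℝ | ∃ Λ, IsSeparable dA d Λ ∧ trB Λ = 1 ∧ r = ((ρ * Λ).trace).re}

/-- `F̃^N = sup {tr(ρ Λ) : Λ ∈ 𝒮̃^N, tr_B Λ = 𝕀_A}`. -/
def fidTildeN (dA d N : ℕ) (ρ : Matrix (Fin dA × Fin d) (Fin dA × Fin d) ℂ) : ℝ :=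
  sSup {r : ℝ | ∃ Λ, MemStildeN dA d N Λ ∧ trB Λ = 1 ∧ r = ((ρ * Λ).trace).re}

/-- `F̃_p^N = sup {tr(ρ Λ) : Λ ∈ 𝒮̃_p^N, tr_B Λ = 𝕀_A}`. -/
def fidTildeNp (dA d N : ℕ) (ρ : Matrix (Fin dA × Fin d) (Fin dA × Fin d) ℂ) : ℝ :=
  sSup {r : ℝ | ∃ Λ, MemStildeNp dA d N Λ ∧ trB Λ = 1 ∧ r = ((ρ * Λ).trace).re}

/-- Robustness relative to a set `T` of operators:
`R_T(ρ) = inf {tr σ : σ ∈ T, ρ + σ ∈ T}` (with `inf ∅ = +∞`). -/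
def rob {dA d : ℕ} (T : Set (Matrix (Fin dA × Fin d) (Fin dA × Fin d) ℂ))
    (ρ : Matrix (Fin dA × Fin d) (Fin dA × Fin d) ℂ) : ℝ≥0∞ :=
  sInf {t : ℝ≥0∞ | ∃ σ ∈ T, ρ + σ ∈ T ∧ t = ENNReal.ofReal ((σ.trace).re)}

/-!
Write `ρ = ∑ cᵢ Pᵢ ⊗ Qᵢ` with `Pᵢ, Qᵢ` positive of rank one. Then
`ρ_A ⊗ 𝕀 - ρ = ∑ cᵢ Pᵢ ⊗ (tr Qᵢ · 𝕀 - Qᵢ) ≥ 0`, so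
`ρ - ρ_A ⊗ 𝕀/d = (1 - 1/d) ρ - (1/d)(ρ_A ⊗ 𝕀 - ρ)` is a difference of two positive operators
of traces `1 - 1/d` and `(d - 1)/d`, and `‖A - B‖₁ ≤ tr A + tr B` for positive `A, B`.
-/

open scoped MatrixOrder

section TraceNorm

variable {n : Type*} [Fintype n] [DecidableEq n]

lemma traceNorm_eq_re_trace_cfc_sqrt (Z : Matrix n n ℂ) :
    traceNorm Z = (cfc Real.sqrt (Z * Zᴴ)).trace.re := by
  rw [(posSemidef_self_mul_conjTranspose Z).1.cfc_eq, IsHermitian.cfc,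
    Unitary.conjStarAlgAut_apply, traceNorm]
  rfl

lemma _root_.Matrix.IsHermitian.trace_cfc {A : Matrix n n ℂ} (hA : A.IsHermitian) (f : ℝ → ℝ) :
    (cfc f A).trace = ∑ i, (f (hA.eigenvalues i) : ℂ) := by
  rw [hA.cfc_eq, IsHermitian.cfc, Unitary.conjStarAlgAut_apply, trace_mul_cycle,
    Unitary.coe_star_mul_self, one_mul, trace_diagonal]
  rfl

lemma _root_.Matrix.IsHermitian.traceNorm_eq_sum_abs_eigenvalues {X : Matrix n n ℂ}
    (hX : X.IsHermitian) : traceNorm X = ∑ i, |hX.eigenvalues i| := by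
  have hsq : X * Xᴴ = cfc (fun x : ℝ => x ^ 2) X := by
    rw [cfc_pow _ _ _, cfc_id' ℝ X, hX.eq, sq]
  have habs : cfc Real.sqrt (X * Xᴴ) = cfc (fun x : ℝ => |x|) X := by
    rw [hsq, ← cfc_comp' _ _ X]
    simp [Real.sqrt_sq_eq_abs]
  rw [traceNorm_eq_re_trace_cfc_sqrt, habs, hX.trace_cfc, ← Complex.ofReal_sum, Complex.ofReal_re]

lemma _root_.Matrix.PosSemidef.re_trace_mul_nonneg {A B : Matrix n n ℂ} (hA : A.PosSemidef)
    (hB : B.PosSemidef) : 0 ≤ (A * B).trace.re := by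
  obtain ⟨C, rfl⟩ := CStarAlgebra.nonneg_iff_eq_star_mul_self.mp hA.nonneg
  rw [star_eq_conjTranspose, ← trace_mul_cycle]
  exact (Complex.nonneg_iff.mp (hB.mul_mul_conjTranspose_same C).trace_nonneg).1

/-- With `S` the sign of `A - B`, `‖A - B‖₁ = tr (S A) - tr (S B)` and `-1 ≤ S ≤ 1`. -/
lemma traceNorm_sub_le {A B : Matrix n n ℂ} (hA : A.PosSemidef) (hB : B.PosSemidef) :
    traceNorm (A - B) ≤ A.trace.re + B.trace.re := by
  have hX : (A - B).IsHermitian := hA.1.sub hB.1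
  set sign : ℝ → ℝ := fun x => if x < 0 then -1 else 1
  have hcont : ContinuousOn sign (spectrum ℝ (A - B)) := (A - B).finite_real_spectrum.continuousOn _
  set S := cfc sign (A - B)
  have hS_le_one : S ≤ 1 := cfc_le_one _ _ fun x _ => by simp only [sign]; split_ifs <;> norm_num
  have hneg_one_le_S : -1 ≤ S := by
    simpa using algebraMap_le_cfc _ (-1 : ℝ) (A - B) fun x _ => by simp only [sign]; split_ifs <;> norm_num
  have hnorm : traceNorm (A - B) = (S * (A - B)).trace.re := by
    have hsign : (fun x => sign x * x) = fun x => |x| := by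
      ext x; simp only [sign]; split_ifs with h
      · rw [abs_of_neg h]; ring
      · rw [abs_of_nonneg (not_lt.mp h), one_mul]
    rw [← cfc_id' ℝ (A - B), ← cfc_mul _ _ (A - B), cfc_id' ℝ (A - B), hsign, hX.trace_cfc,
      hX.traceNorm_eq_sum_abs_eigenvalues, ← Complex.ofReal_sum, Complex.ofReal_re]
  have hSA : 0 ≤ ((1 - S) * A).trace.re :=
    (nonneg_iff_posSemidef.mp (sub_nonneg.mpr hS_le_one)).re_trace_mul_nonneg hA
  have hSB : 0 ≤ ((1 + S) * B).trace.re :=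
    (nonneg_iff_posSemidef.mp (neg_le_iff_add_nonneg'.mp hneg_one_le_S)).re_trace_mul_nonneg hB
  rw [sub_mul, one_mul, trace_sub, Complex.sub_re] at hSA
  rw [add_mul, one_mul, trace_add, Complex.add_re] at hSB
  rw [hnorm, mul_sub, trace_sub, Complex.sub_re]
  linarith

end TraceNorm

section Separable

variable {dA d : ℕ}

lemma _root_.Matrix.PosSemidef.posSemidef_trace_smul_one_sub {n : Type*} [Fintype n]
    [DecidableEq n] {A : Matrix n n ℂ} (hA : A.PosSemidef) : (A.trace • 1 - A).PosSemidef := by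
  have htrace : A.trace = ((∑ i, hA.1.eigenvalues i : ℝ) : ℂ) := by
    simp [hA.1.trace_eq_sum_eigenvalues]
  have hle : A ≤ algebraMap ℝ (Matrix n n ℂ) (∑ i, hA.1.eigenvalues i) := by
    rw [le_algebraMap_iff_spectrum_le, hA.1.spectrum_real_eq_range_eigenvalues]
    rintro _ ⟨j, rfl⟩
    exact Finset.single_le_sum (fun i _ => hA.eigenvalues_nonneg i) (Finset.mem_univ j)
  rwa [Algebra.algebraMap_eq_smul_one, ← Complex.coe_smul, ← htrace, ← sub_nonneg,
    nonneg_iff_posSemidef] at hle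

lemma trB_kronecker_one_sub_eq_sum {k : ℕ} (c : Fin k → ℂ)
    (P : Fin k → Matrix (Fin dA) (Fin dA) ℂ) (Q : Fin k → Matrix (Fin d) (Fin d) ℂ) :
    trB (∑ i, c i • (P i ⊗ₖ Q i)) ⊗ₖ (1 : Matrix (Fin d) (Fin d) ℂ) - ∑ i, c i • (P i ⊗ₖ Q i) =
      ∑ i, c i • (P i ⊗ₖ ((Q i).trace • 1 - Q i)) := by
  ext ⟨a, b⟩ ⟨a', b'⟩
  simp only [Matrix.sub_apply, kroneckerMap_apply, trB, Matrix.sum_apply, Matrix.smul_apply,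
    smul_eq_mul, Finset.sum_mul, trace, diag_apply, mul_sub, Finset.mul_sum, Finset.sum_sub_distrib,
    sub_left_inj]
  rw [Finset.sum_comm]
  exact Finset.sum_congr rfl fun i _ => Finset.sum_congr rfl fun x _ => by ring

lemma trace_trB (M : Matrix (Fin dA × Fin d) (Fin dA × Fin d) ℂ) : (trB M).trace = M.trace := by
  simp only [trace, trB, diag_apply]
  exact (Fintype.sum_prod_type' _).symm

lemma posSemidef_proj {m : Type*} [Fintype m] (ψ : m → ℂ) : (proj ψ).PosSemidef :=
  posSemidef_vecMulVec_self_star ψ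

lemma IsSeparable.posSemidef {Λ : Matrix (Fin dA × Fin d) (Fin dA × Fin d) ℂ}
    (hΛ : IsSeparable dA d Λ) : Λ.PosSemidef := by
  obtain ⟨k, c, ψ, φ, hc, rfl⟩ := hΛ
  exact posSemidef_sum _ fun i _ =>
    ((posSemidef_proj _).kronecker (posSemidef_proj _)).smul (Complex.zero_le_real.mpr (hc i))

lemma IsSeparable.posSemidef_trB_kronecker_one_sub
    {Λ : Matrix (Fin dA × Fin d) (Fin dA × Fin d) ℂ} (hΛ : IsSeparable dA d Λ) :
    (trB Λ ⊗ₖ (1 : Matrix (Fin d) (Fin d) ℂ) - Λ).PosSemidef := by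
  obtain ⟨k, c, ψ, φ, hc, rfl⟩ := hΛ
  rw [trB_kronecker_one_sub_eq_sum]
  exact posSemidef_sum _ fun i _ =>
    ((posSemidef_proj _).kronecker (posSemidef_proj _).posSemidef_trace_smul_one_sub).smul
      (Complex.zero_le_real.mpr (hc i))

end Separable

theorem stmt4_general (dA d : ℕ) (hd : 1 ≤ d)
    (ρ : Matrix (Fin dA × Fin d) (Fin dA × Fin d) ℂ)
    (hρsep : IsSeparable dA d ρ) (hρtr : ρ.trace = 1) :
    traceNorm (ρ - (1 / (d : ℂ)) • (trB ρ ⊗ₖ (1 : Matrix (Fin d) (Fin d) ℂ))) ≤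
      2 * ((d : ℝ) - 1) / d := by
  set r : ℝ := 1 / d
  have hr : 0 ≤ r := by positivity
  have hr' : 0 ≤ 1 - r := sub_nonneg.mpr (div_le_one_of_le₀ (by exact_mod_cast hd) (by positivity))
  have hsplit : ρ - (1 / (d : ℂ)) • (trB ρ ⊗ₖ (1 : Matrix (Fin d) (Fin d) ℂ)) =
      ((1 - r : ℝ) : ℂ) • ρ - (r : ℂ) • (trB ρ ⊗ₖ (1 : Matrix (Fin d) (Fin d) ℂ) - ρ) := by
    simp only [r, Complex.ofReal_sub, Complex.ofReal_one, Complex.ofReal_div, Complex.ofReal_natCast,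
      smul_sub, sub_smul, one_smul]
    abel
  have htrace : (trB ρ ⊗ₖ (1 : Matrix (Fin d) (Fin d) ℂ)).trace = d := by
    rw [trace_kronecker, trace_trB, hρtr, trace_one, Fintype.card_fin, one_mul]
  rw [hsplit]
  refine (traceNorm_sub_le (hρsep.posSemidef.smul (Complex.zero_le_real.mpr hr'))
    (hρsep.posSemidef_trB_kronecker_one_sub.smul (Complex.zero_le_real.mpr hr))).trans_eq ?_
  have hd0 : (d : ℝ) ≠ 0 := by positivity
  simp only [trace_smul, trace_sub, htrace, hρtr, smul_eq_mul, mul_one, Complex.ofReal_re,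
    ← Complex.ofReal_natCast, ← Complex.ofReal_one, ← Complex.ofReal_sub, ← Complex.ofReal_mul, r]
  field_simp
  ring

/-- for a separable state `ρ`,
`‖ρ - ρ_A ⊗ 𝕀_B/d‖₁ ≤ 2(d-1)/d`. -/
theorem stmt4 (dA d : ℕ) (hdA : 1 ≤ dA) (hd : 1 ≤ d)
    (ρ : Matrix (Fin dA × Fin d) (Fin dA × Fin d) ℂ)
    (hρsep : IsSeparable dA d ρ) (hρtr : ρ.trace = 1) :
    traceNorm (ρ - (1 / (d : ℂ)) • (trB ρ ⊗ₖ (1 : Matrix (Fin d) (Fin d) ℂ))) ≤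
      2 * ((d : ℝ) - 1) / d :=
  stmt4_general dA d hd ρ hρsep hρtr

end SepPaper
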